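/- The sequence (Δ₀(n))_{n≥0} is 2-regular, the sequence (Δ₀(n) mod 2)_{n≥0} is 2-automatic, and the sequence (m₀(n) mod 2)_{n≥0} is 2-automatic. -/

import Mathlib

/-- The 2-kernel of a sequence `s : ℕ → ℤ`. -/
def kernel2 (s : ℕ → ℤ) : Set (ℕ → ℤ) :=
  {t | ∃ i j : ℕ, j < 2 ^ i ∧ t = fun n => s (2 ^ i * n + j)}

/-- A sequence is 2-regular if the ℤ-module spanned by its 2-kernel is finitely generated. -/
def IsTwoRegular (s : ℕ → ℤ) : Prop :=
  (Submodule.span ℤ (kernel2 s)).FG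

/-- A sequence is 2-automatic if its 2-kernel is finite. -/
def IsTwoAutomatic (s : ℕ → ℤ) : Prop :=
  (kernel2 s).Finite

/-- The period-doubling word, fixed point (starting with 0) of 0 ↦ 01, 1 ↦ 00:
its `n`-th letter is the parity of the 2-adic valuation of `n+1`. -/
def pd (n : ℕ) : ℕ := (n + 1).factorization 2 % 2

/-- The Thue–Morse word, fixed point (starting with 0) of 0 ↦ 01, 1 ↦ 10:
its `n`-th letter is the parity of the binary digit sum of `n`. -/
def tm (n : ℕ) : ℕ := (Nat.digits 2 n).sum % 2

/-- The 2-block coding `x = block(p, 2)` of the period-doubling word. -/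
def xw (n : ℕ) : ℕ := 2 * pd n + pd (n + 1)

/-- The 2-block coding `y = block(t, 2)` of the Thue–Morse word. -/
def yw (n : ℕ) : ℕ := 2 * tm n + tm (n + 1)

/-- The factor of an infinite word `w` of length `len` occurring at position `i`. -/
def factorAt (w : ℕ → ℕ) (i len : ℕ) : List ℕ :=
  (List.range len).map fun k => w (i + k)

/-- `u` is a factor of the infinite word `w`. -/
def IsFactor (w : ℕ → ℕ) (u : List ℕ) : Prop :=
  ∃ i, u = factorAt w i u.length

/-- Maximal number of 0's in a factor of `x` of length `n`. -/
noncomputable def M0 (n : ℕ) : ℕ := sSup {k | ∃ i, (factorAt xw i n).count 0 = k}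

/-- Minimal number of 0's in a factor of `x` of length `n`. -/
noncomputable def m0 (n : ℕ) : ℕ := sInf {k | ∃ i, (factorAt xw i n).count 0 = k}

noncomputable def D0 (n : ℕ) : ℕ := M0 n - m0 n

/-- Maximal number of 2's in a factor of `x` of length `n`. -/
noncomputable def M2c (n : ℕ) : ℕ := sSup {k | ∃ i, (factorAt xw i n).count 2 = k}

/-- Minimal number of 2's in a factor of `x` of length `n`. -/
noncomputable def m2c (n : ℕ) : ℕ := sInf {k | ∃ i, (factorAt xw i n).count 2 = k}

/-- The max-jump function for `M0`. -/
noncomputable def JM0 : ℕ → ℕ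
  | 0 => 0
  | n + 1 => if M0 n < M0 (n + 1) then 1 else 0

/-- The min-jump function for `m0`. -/
noncomputable def jm0 (n : ℕ) : ℕ := if m0 n < m0 (n + 1) then 1 else 0

/-- Maximal total number of 1's and 2's in a factor of `y` of length `n`. -/
noncomputable def M12 (n : ℕ) : ℕ :=
  sSup {k | ∃ i, (factorAt yw i n).count 1 + (factorAt yw i n).count 2 = k}

/-- Minimal total number of 1's and 2's in a factor of `y` of length `n`. -/
noncomputable def m12 (n : ℕ) : ℕ :=
  sInf {k | ∃ i, (factorAt yw i n).count 1 + (factorAt yw i n).count 2 = k}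

noncomputable def D12 (n : ℕ) : ℕ := M12 n - m12 n

/-- Maximal total number of 0's and 3's in a factor of `y` of length `n`. -/
noncomputable def M03 (n : ℕ) : ℕ :=
  sSup {k | ∃ i, (factorAt yw i n).count 0 + (factorAt yw i n).count 3 = k}

/-- Minimal total number of 0's and 3's in a factor of `y` of length `n`. -/
noncomputable def m03 (n : ℕ) : ℕ :=
  sInf {k | ∃ i, (factorAt yw i n).count 0 + (factorAt yw i n).count 3 = k}

/-- The max-jump function for `M03`. -/
noncomputable def JM03 (n : ℕ) : ℕ := if M03 (n - 1) < M03 n then 1 else 0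

/-- The min-jump function for `m03`. -/
noncomputable def jm03 (n : ℕ) : ℕ := if m03 n < m03 (n + 1) then 1 else 0

/-- Abelian complexity: the number of abelian equivalence classes (i.e. distinct
multisets of letters) of factors of `w` of length `n`. -/
noncomputable def abComplexity (w : ℕ → ℕ) (n : ℕ) : ℕ :=
  Set.ncard {m : Multiset ℕ | ∃ i, (↑(factorAt w i n) : Multiset ℕ) = m}

/-- The number of occurrences of `v` as a factor of `u`. -/
def countFactor (u v : List ℕ) : ℕ :=
  ((List.range (u.length + 1 - v.length)).filter
    fun i => decide ((u.drop i).take v.length = v)).length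

/-- 2-abelian complexity: the number of 2-abelian equivalence classes of factors of `w`
of length `n`, where two words are 2-abelian equivalent when every word of length at most 2
occurs equally often in both. -/
noncomputable def abel2Complexity (w : ℕ → ℕ) (n : ℕ) : ℕ :=
  Set.ncard {f : List ℕ → ℕ |
    ∃ i, f = fun v => if v.length ≤ 2 then countFactor (factorAt w i n) v else 0}

/-- The morphism φ : 0 ↦ 12, 1 ↦ 12, 2 ↦ 00. -/
def phiL : ℕ → List ℕ
  | 0 => [1, 2]
  | 1 => [1, 2]
  | 2 => [0, 0]
  | _ => []

/-- The morphism τ : 0 ↦ 0, 1 ↦ 2, 2 ↦ 1. -/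
def tauL : ℕ → ℕ
  | 1 => 2
  | 2 => 1
  | n => n

/-! Since `x` is the fixed point of `φ : 0, 1 ↦ 12, 2 ↦ 00`, the letters `x(2k)` and `x(2k+1)` are
both `0` exactly when `x(k) = 2`, and exactly one of them is `2` otherwise. Counting through prefix
sums, the numbers of `0`'s and of `2`'s in a factor of length `2n` or `2n+1` are thus determined
by numbers of `2`'s in factors of lengths `n` and `n+1`. Taking extrema gives
`M₀(2n) = 2 M₂(n)`, `M₀(2n+1) = M₂(n) + M₂(n+1)` (some position starts extremal windows of
both lengths `n` and `n+1`, since counts grow by at most one), the same for `m₀`, and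
`M₂(2n) = n - m₂(n)`, `M₂(2n+1) = n+1 - m₂(n+1)`, `m₂(2n) = m₂(2n+1) = n - M₂(n)`. Hence
`(M₂(n), m₂(n), M₂(n+1), m₂(n+1), n, 1)` has a 2-linear representation, so `Δ₀` and `m₀` are
2-regular. Finally, every kernel element of a 2-regular sequence is a `ℤ`-combination of finitely
many generators, so modulo `m` only finitely many kernel elements remain. -/

open Matrix

theorem kernel2_subset_of_decimation_mem {s : ℕ → ℤ} {C : Set (ℕ → ℤ)} (hs : s ∈ C)
    (h₀ : ∀ f ∈ C, (fun n => f (2 * n)) ∈ C) (h₁ : ∀ f ∈ C, (fun n => f (2 * n + 1)) ∈ C) :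
    kernel2 s ⊆ C := by
  suffices key : ∀ i, ∀ f ∈ C, ∀ j < 2 ^ i, (fun n => f (2 ^ i * n + j)) ∈ C by
    rintro t ⟨i, j, hj, rfl⟩
    exact key i s hs j hj
  intro i
  induction i with
  | zero =>
    intro f hf j hj
    obtain rfl : j = 0 := by omega
    simpa using hf
  | succ i ih =>
    intro f hf j hj
    obtain ⟨q, rfl | rfl⟩ := Nat.even_or_odd' j
    · convert ih _ (h₀ f hf) q (by omega) using 3 with n
      ring
    · convert ih _ (h₁ f hf) q (by omega) using 3 with n
      ring

theorem isTwoRegular_of_linearRepresentation {d : ℕ} (v : ℕ → Fin d → ℤ)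
    (A₀ A₁ : Matrix (Fin d) (Fin d) ℤ) (hv₀ : ∀ n, v (2 * n) = A₀ *ᵥ v n)
    (hv₁ : ∀ n, v (2 * n + 1) = A₁ *ᵥ v n) {s : ℕ → ℤ} (c₀ c₁ : Fin d → ℤ)
    (hs₀ : ∀ n, s (2 * n) = c₀ ⬝ᵥ v n) (hs₁ : ∀ n, s (2 * n + 1) = c₁ ⬝ᵥ v n) :
    IsTwoRegular s := by
  set Q := Submodule.span ℤ (Set.range fun i n => v n i)
  have mem_Q_iff : ∀ f, f ∈ Q ↔ ∃ c : Fin d → ℤ, f = fun n => c ⬝ᵥ v n := fun f => by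
    refine (Submodule.mem_span_range_iff_exists_fun ℤ).trans (exists_congr fun c => ?_)
    constructor <;> rintro rfl <;> ext n <;> simp [dotProduct, mul_comm]
  have decimate : ∀ (σ : ℕ → ℕ) (A : Matrix (Fin d) (Fin d) ℤ), (∀ n, v (σ n) = A *ᵥ v n) →
      ∀ f ∈ Q, (fun n => f (σ n)) ∈ Q := by
    intro σ A hA f hf
    obtain ⟨c, rfl⟩ := (mem_Q_iff f).1 hf
    exact (mem_Q_iff _).2 ⟨c ᵥ* A, funext fun n => by simp only [hA, dotProduct_mulVec]⟩
  have hker : kernel2 s ⊆ insert s (Q : Set (ℕ → ℤ)) := by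
    refine kernel2_subset_of_decimation_mem (Set.mem_insert _ _) ?_ ?_ <;>
      rintro f (rfl | hf)
    · exact Or.inr ((mem_Q_iff _).2 ⟨c₀, funext hs₀⟩)
    · exact Or.inr (decimate _ A₀ hv₀ f hf)
    · exact Or.inr ((mem_Q_iff _).2 ⟨c₁, funext hs₁⟩)
    · exact Or.inr (decimate _ A₁ hv₁ f hf)
  have hQ : Q.FG := Submodule.fg_span (Set.finite_range _)
  refine ((Submodule.fg_span_singleton s).sup hQ).of_le ?_
  calc Submodule.span ℤ (kernel2 s) ≤ Submodule.span ℤ (insert s (Q : Set (ℕ → ℤ))) :=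
        Submodule.span_mono hker
    _ = (ℤ ∙ s) ⊔ Q := by rw [Submodule.span_insert, Submodule.span_eq]

theorem IsTwoRegular.isTwoAutomatic_emod {s : ℕ → ℤ} (hs : IsTwoRegular s) (m : ℕ) [NeZero m] :
    IsTwoAutomatic fun n => s n % m := by
  obtain ⟨k, g, hg⟩ := Submodule.fg_iff_exists_fin_generating_family.1 hs
  refine (Set.finite_range fun (c : Fin k → ZMod m) n =>
    ((∑ i, c i * (g i n : ZMod m)).val : ℤ)).subset ?_
  rintro _ ⟨a, b, hb, rfl⟩
  have ht : (fun n => s (2 ^ a * n + b)) ∈ Submodule.span ℤ (Set.range g) :=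
    hg ▸ Submodule.subset_span ⟨a, b, hb, rfl⟩
  obtain ⟨c, hc⟩ := (Submodule.mem_span_range_iff_exists_fun ℤ).1 ht
  refine ⟨fun i => c i, funext fun n => ?_⟩
  simp only [← ZMod.val_intCast, ← congrFun hc n]
  simp

section Counting

variable (w : ℕ → ℕ) (c : ℕ)

def countBefore (N : ℕ) : ℕ := ∑ k ∈ Finset.range N, if w k = c then 1 else 0

-- `M0 = maxCount xw 0`, `m0 = minCount xw 0`, `M2c = maxCount xw 2`, `m2c = minCount xw 2`.
noncomputable def maxCount (n : ℕ) : ℕ := sSup {k | ∃ i, (factorAt w i n).count c = k}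

noncomputable def minCount (n : ℕ) : ℕ := sInf {k | ∃ i, (factorAt w i n).count c = k}

theorem countBefore_succ (N : ℕ) :
    countBefore w c (N + 1) = countBefore w c N + if w N = c then 1 else 0 :=
  Finset.sum_range_succ _ _

theorem count_factorAt_succ (i n : ℕ) :
    (factorAt w i (n + 1)).count c = (factorAt w i n).count c + if w (i + n) = c then 1 else 0 := by
  simp [factorAt, List.range_succ, List.count_singleton]

theorem count_factorAt_le (i n : ℕ) : (factorAt w i n).count c ≤ n := by
  simpa [factorAt] using List.count_le_length (a := c) (l := factorAt w i n)

theorem count_factorAt_add_countBefore (i n : ℕ) :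
    (factorAt w i n).count c + countBefore w c i = countBefore w c (i + n) := by
  induction n with
  | zero => simp [factorAt]
  | succ n ih =>
    rw [count_factorAt_succ, ← Nat.add_assoc, countBefore_succ]
    omega

theorem bddAbove_counts (n : ℕ) : BddAbove {k | ∃ i, (factorAt w i n).count c = k} :=
  ⟨n, by rintro _ ⟨i, rfl⟩; exact count_factorAt_le w c i n⟩

theorem count_le_maxCount (i n : ℕ) : (factorAt w i n).count c ≤ maxCount w c n :=
  le_csSup (bddAbove_counts w c n) ⟨i, rfl⟩

theorem exists_count_eq_maxCount (n : ℕ) : ∃ i, (factorAt w i n).count c = maxCount w c n :=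
  Nat.sSup_mem (s := {k | ∃ i, (factorAt w i n).count c = k}) ⟨_, 0, rfl⟩ (bddAbove_counts w c n)

theorem minCount_le_count (i n : ℕ) : minCount w c n ≤ (factorAt w i n).count c :=
  Nat.sInf_le ⟨i, rfl⟩

theorem exists_count_eq_minCount (n : ℕ) : ∃ i, (factorAt w i n).count c = minCount w c n :=
  Nat.sInf_mem (s := {k | ∃ i, (factorAt w i n).count c = k}) ⟨_, 0, rfl⟩

theorem count_factorAt_le_succ (i n : ℕ) :
    (factorAt w i n).count c ≤ (factorAt w i (n + 1)).count c := by
  rw [count_factorAt_succ]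
  exact Nat.le_add_right _ _

theorem count_factorAt_succ_le (i n : ℕ) :
    (factorAt w i (n + 1)).count c ≤ (factorAt w i n).count c + 1 := by
  rw [count_factorAt_succ]
  split_ifs <;> omega

theorem minCount_le_maxCount (n : ℕ) : minCount w c n ≤ maxCount w c n :=
  (minCount_le_count w c 0 n).trans (count_le_maxCount w c 0 n)

theorem exists_count_eq_maxCount_and_succ (n : ℕ) :
    ∃ i, (factorAt w i n).count c = maxCount w c n ∧
      (factorAt w i (n + 1)).count c = maxCount w c (n + 1) := by
  obtain ⟨i, hi⟩ := exists_count_eq_maxCount w c n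
  obtain ⟨j, hj⟩ := exists_count_eq_maxCount w c (n + 1)
  by_cases h : (factorAt w i (n + 1)).count c = maxCount w c (n + 1)
  · exact ⟨i, hi, h⟩
  · refine ⟨j, ?_, hj⟩
    have := count_le_maxCount w c i (n + 1)
    have := count_le_maxCount w c j n
    have := count_factorAt_le_succ w c i n
    have := count_factorAt_succ_le w c j n
    omega

theorem exists_count_eq_minCount_and_succ (n : ℕ) :
    ∃ i, (factorAt w i n).count c = minCount w c n ∧
      (factorAt w i (n + 1)).count c = minCount w c (n + 1) := by
  obtain ⟨i, hi⟩ := exists_count_eq_minCount w c n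
  obtain ⟨j, hj⟩ := exists_count_eq_minCount w c (n + 1)
  by_cases h : (factorAt w i (n + 1)).count c = minCount w c (n + 1)
  · exact ⟨i, hi, h⟩
  · refine ⟨j, ?_, hj⟩
    have := minCount_le_count w c i (n + 1)
    have := minCount_le_count w c j n
    have := count_factorAt_succ_le w c i n
    have := count_factorAt_le_succ w c j n
    omega

end Counting

theorem pd_le_one (k : ℕ) : pd k ≤ 1 := Nat.lt_succ_iff.1 (Nat.mod_lt _ two_pos)

theorem pd_two_mul (k : ℕ) : pd (2 * k) = 0 := by
  rw [pd, Nat.factorization_eq_zero_of_not_dvd (by omega), Nat.zero_mod]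

theorem pd_two_mul_add_one (k : ℕ) : pd (2 * k + 1) = 1 - pd k := by
  rw [pd, pd, show 2 * k + 1 + 1 = 2 * (k + 1) by ring,
    Nat.factorization_mul two_ne_zero (by omega : k + 1 ≠ 0), Finsupp.add_apply,
    Nat.prime_two.factorization_self]
  omega

theorem xw_two_mul (k : ℕ) : xw (2 * k) = 1 - pd k := by
  rw [xw, pd_two_mul, pd_two_mul_add_one, mul_zero, zero_add]

theorem xw_two_mul_add_one (k : ℕ) : xw (2 * k + 1) = 2 * (1 - pd k) := by
  rw [xw, pd_two_mul_add_one, show 2 * k + 1 + 1 = 2 * (k + 1) by ring, pd_two_mul, add_zero]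

theorem xw_eq_two_iff (k : ℕ) : xw k = 2 ↔ pd k = 1 := by
  obtain ⟨j, rfl | rfl⟩ := Nat.even_or_odd' k
  · rw [xw_two_mul, pd_two_mul]; omega
  · rw [xw_two_mul_add_one, pd_two_mul_add_one]; have := pd_le_one j; omega

theorem ite_xw_eq_two (k : ℕ) : (if xw k = 2 then 1 else 0) = pd k := by
  have := pd_le_one k
  split_ifs with h <;> rw [xw_eq_two_iff] at h <;> omega

theorem countBefore_two_two_mul (N : ℕ) : countBefore xw 2 (2 * N) + countBefore xw 2 N = N := by
  induction N with
  | zero => simp [countBefore]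
  | succ N ih =>
    rw [show 2 * (N + 1) = 2 * N + 1 + 1 by ring, countBefore_succ, countBefore_succ,
      countBefore_succ, ite_xw_eq_two, ite_xw_eq_two, ite_xw_eq_two, pd_two_mul,
      pd_two_mul_add_one]
    have := pd_le_one N
    omega

theorem countBefore_two_two_mul_add_one (N : ℕ) :
    countBefore xw 2 (2 * N + 1) = countBefore xw 2 (2 * N) := by
  rw [countBefore_succ, ite_xw_eq_two, pd_two_mul, add_zero]

theorem countBefore_zero_two_mul (N : ℕ) : countBefore xw 0 (2 * N) = 2 * countBefore xw 2 N := by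
  induction N with
  | zero => simp [countBefore]
  | succ N ih =>
    rw [show 2 * (N + 1) = 2 * N + 1 + 1 by ring, countBefore_succ, countBefore_succ,
      countBefore_succ, ite_xw_eq_two, xw_two_mul, xw_two_mul_add_one]
    have := pd_le_one N
    split_ifs <;> omega

theorem countBefore_zero_two_mul_add_one (N : ℕ) :
    countBefore xw 0 (2 * N + 1) = countBefore xw 2 N + countBefore xw 2 (N + 1) := by
  rw [countBefore_succ, countBefore_zero_two_mul, countBefore_succ, ite_xw_eq_two, xw_two_mul]
  have := pd_le_one N
  split_ifs <;> omega

theorem count_two_factorAt_two_mul (i n : ℕ) :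
    (factorAt xw (2 * i) (2 * n)).count 2 + (factorAt xw i n).count 2 = n ∧
    (factorAt xw (2 * i + 1) (2 * n)).count 2 + (factorAt xw i n).count 2 = n := by
  have e₀ := count_factorAt_add_countBefore xw 2 (2 * i) (2 * n)
  have e₁ := count_factorAt_add_countBefore xw 2 (2 * i + 1) (2 * n)
  have h := count_factorAt_add_countBefore xw 2 i n
  rw [← mul_add] at e₀
  rw [show 2 * i + 1 + 2 * n = 2 * (i + n) + 1 by ring] at e₁
  have := countBefore_two_two_mul i
  have := countBefore_two_two_mul (i + n)
  have := countBefore_two_two_mul_add_one i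
  have := countBefore_two_two_mul_add_one (i + n)
  omega

theorem count_two_factorAt_two_mul_add_one (i n : ℕ) :
    (factorAt xw (2 * i) (2 * n + 1)).count 2 + (factorAt xw i n).count 2 = n ∧
    (factorAt xw (2 * i + 1) (2 * n + 1)).count 2 + (factorAt xw i (n + 1)).count 2 = n + 1 := by
  have e₀ := count_factorAt_add_countBefore xw 2 (2 * i) (2 * n + 1)
  have e₁ := count_factorAt_add_countBefore xw 2 (2 * i + 1) (2 * n + 1)
  have h₀ := count_factorAt_add_countBefore xw 2 i n
  have h₁ := count_factorAt_add_countBefore xw 2 i (n + 1)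
  rw [show 2 * i + (2 * n + 1) = 2 * (i + n) + 1 by ring] at e₀
  rw [show 2 * i + 1 + (2 * n + 1) = 2 * (i + n + 1) by ring] at e₁
  rw [← add_assoc] at h₁
  have := countBefore_two_two_mul i
  have := countBefore_two_two_mul (i + n)
  have := countBefore_two_two_mul (i + n + 1)
  have := countBefore_two_two_mul_add_one i
  have := countBefore_two_two_mul_add_one (i + n)
  omega

theorem count_zero_factorAt_two_mul (i n : ℕ) :
    (factorAt xw (2 * i) (2 * n)).count 0 = 2 * (factorAt xw i n).count 2 ∧
    (factorAt xw (2 * i + 1) (2 * n)).count 0 =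
      (factorAt xw i n).count 2 + (factorAt xw (i + 1) n).count 2 := by
  have e₀ := count_factorAt_add_countBefore xw 0 (2 * i) (2 * n)
  have e₁ := count_factorAt_add_countBefore xw 0 (2 * i + 1) (2 * n)
  have h₀ := count_factorAt_add_countBefore xw 2 i n
  have h₁ := count_factorAt_add_countBefore xw 2 (i + 1) n
  rw [← mul_add] at e₀
  rw [show 2 * i + 1 + 2 * n = 2 * (i + n) + 1 by ring] at e₁
  rw [add_right_comm] at h₁
  have := countBefore_zero_two_mul i
  have := countBefore_zero_two_mul (i + n)
  have := countBefore_zero_two_mul_add_one i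
  have := countBefore_zero_two_mul_add_one (i + n)
  omega

theorem count_zero_factorAt_two_mul_add_one (i n : ℕ) :
    (factorAt xw (2 * i) (2 * n + 1)).count 0 =
      (factorAt xw i n).count 2 + (factorAt xw i (n + 1)).count 2 ∧
    (factorAt xw (2 * i + 1) (2 * n + 1)).count 0 =
      (factorAt xw i (n + 1)).count 2 + (factorAt xw (i + 1) n).count 2 := by
  have e₀ := count_factorAt_add_countBefore xw 0 (2 * i) (2 * n + 1)
  have e₁ := count_factorAt_add_countBefore xw 0 (2 * i + 1) (2 * n + 1)
  have h₀ := count_factorAt_add_countBefore xw 2 i n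
  have h₁ := count_factorAt_add_countBefore xw 2 i (n + 1)
  have h₂ := count_factorAt_add_countBefore xw 2 (i + 1) n
  rw [show 2 * i + (2 * n + 1) = 2 * (i + n) + 1 by ring] at e₀
  rw [show 2 * i + 1 + (2 * n + 1) = 2 * (i + n + 1) by ring] at e₁
  rw [← add_assoc] at h₁
  rw [add_right_comm] at h₂
  have := countBefore_zero_two_mul i
  have := countBefore_zero_two_mul (i + n + 1)
  have := countBefore_zero_two_mul_add_one i
  have := countBefore_zero_two_mul_add_one (i + n)
  omega

theorem maxCount_two_two_mul (n : ℕ) : maxCount xw 2 (2 * n) + minCount xw 2 n = n := by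
  obtain ⟨j, hj⟩ := exists_count_eq_maxCount xw 2 (2 * n)
  obtain ⟨i, hi⟩ := exists_count_eq_minCount xw 2 n
  have := count_le_maxCount xw 2 (2 * i) (2 * n)
  have := (count_two_factorAt_two_mul i n).1
  obtain ⟨k, rfl | rfl⟩ := Nat.even_or_odd' j <;>
  · have := count_two_factorAt_two_mul k n
    have := minCount_le_count xw 2 k n
    omega

theorem minCount_two_two_mul (n : ℕ) : minCount xw 2 (2 * n) + maxCount xw 2 n = n := by
  obtain ⟨j, hj⟩ := exists_count_eq_minCount xw 2 (2 * n)
  obtain ⟨i, hi⟩ := exists_count_eq_maxCount xw 2 n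
  have := minCount_le_count xw 2 (2 * i) (2 * n)
  have := (count_two_factorAt_two_mul i n).1
  obtain ⟨k, rfl | rfl⟩ := Nat.even_or_odd' j <;>
  · have := count_two_factorAt_two_mul k n
    have := count_le_maxCount xw 2 k n
    omega

theorem maxCount_two_two_mul_add_one (n : ℕ) :
    maxCount xw 2 (2 * n + 1) + minCount xw 2 (n + 1) = n + 1 := by
  obtain ⟨j, hj⟩ := exists_count_eq_maxCount xw 2 (2 * n + 1)
  obtain ⟨i, hi⟩ := exists_count_eq_minCount xw 2 (n + 1)
  have := count_le_maxCount xw 2 (2 * i + 1) (2 * n + 1)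
  have := (count_two_factorAt_two_mul_add_one i n).2
  obtain ⟨k, rfl | rfl⟩ := Nat.even_or_odd' j <;>
  · have := count_two_factorAt_two_mul_add_one k n
    have := minCount_le_count xw 2 k (n + 1)
    have := count_factorAt_succ_le xw 2 k n
    omega

theorem minCount_two_two_mul_add_one (n : ℕ) :
    minCount xw 2 (2 * n + 1) + maxCount xw 2 n = n := by
  obtain ⟨j, hj⟩ := exists_count_eq_minCount xw 2 (2 * n + 1)
  obtain ⟨i, hi⟩ := exists_count_eq_maxCount xw 2 n
  have := minCount_le_count xw 2 (2 * i) (2 * n + 1)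
  have := (count_two_factorAt_two_mul_add_one i n).1
  obtain ⟨k, rfl | rfl⟩ := Nat.even_or_odd' j <;>
  · have := count_two_factorAt_two_mul_add_one k n
    have := count_le_maxCount xw 2 k n
    have := count_factorAt_succ_le xw 2 k n
    omega

theorem maxCount_zero_two_mul (n : ℕ) : maxCount xw 0 (2 * n) = 2 * maxCount xw 2 n := by
  obtain ⟨j, hj⟩ := exists_count_eq_maxCount xw 0 (2 * n)
  obtain ⟨i, hi⟩ := exists_count_eq_maxCount xw 2 n
  have := count_le_maxCount xw 0 (2 * i) (2 * n)
  have := (count_zero_factorAt_two_mul i n).1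
  obtain ⟨k, rfl | rfl⟩ := Nat.even_or_odd' j <;>
  · have := count_zero_factorAt_two_mul k n
    have := count_le_maxCount xw 2 k n
    have := count_le_maxCount xw 2 (k + 1) n
    omega

theorem minCount_zero_two_mul (n : ℕ) : minCount xw 0 (2 * n) = 2 * minCount xw 2 n := by
  obtain ⟨j, hj⟩ := exists_count_eq_minCount xw 0 (2 * n)
  obtain ⟨i, hi⟩ := exists_count_eq_minCount xw 2 n
  have := minCount_le_count xw 0 (2 * i) (2 * n)
  have := (count_zero_factorAt_two_mul i n).1
  obtain ⟨k, rfl | rfl⟩ := Nat.even_or_odd' j <;>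
  · have := count_zero_factorAt_two_mul k n
    have := minCount_le_count xw 2 k n
    have := minCount_le_count xw 2 (k + 1) n
    omega

theorem maxCount_zero_two_mul_add_one (n : ℕ) :
    maxCount xw 0 (2 * n + 1) = maxCount xw 2 n + maxCount xw 2 (n + 1) := by
  obtain ⟨j, hj⟩ := exists_count_eq_maxCount xw 0 (2 * n + 1)
  obtain ⟨i, hi, hi'⟩ := exists_count_eq_maxCount_and_succ xw 2 n
  have := count_le_maxCount xw 0 (2 * i) (2 * n + 1)
  have := (count_zero_factorAt_two_mul_add_one i n).1
  obtain ⟨k, rfl | rfl⟩ := Nat.even_or_odd' j <;>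
  · have := count_zero_factorAt_two_mul_add_one k n
    have := count_le_maxCount xw 2 k n
    have := count_le_maxCount xw 2 k (n + 1)
    have := count_le_maxCount xw 2 (k + 1) n
    omega

theorem minCount_zero_two_mul_add_one (n : ℕ) :
    minCount xw 0 (2 * n + 1) = minCount xw 2 n + minCount xw 2 (n + 1) := by
  obtain ⟨j, hj⟩ := exists_count_eq_minCount xw 0 (2 * n + 1)
  obtain ⟨i, hi, hi'⟩ := exists_count_eq_minCount_and_succ xw 2 n
  have := minCount_le_count xw 0 (2 * i) (2 * n + 1)
  have := (count_zero_factorAt_two_mul_add_one i n).1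
  obtain ⟨k, rfl | rfl⟩ := Nat.even_or_odd' j <;>
  · have := count_zero_factorAt_two_mul_add_one k n
    have := minCount_le_count xw 2 k n
    have := minCount_le_count xw 2 k (n + 1)
    have := minCount_le_count xw 2 (k + 1) n
    omega

noncomputable def extremeTwoCounts (n : ℕ) : Fin 6 → ℤ :=
  ![maxCount xw 2 n, minCount xw 2 n, maxCount xw 2 (n + 1), minCount xw 2 (n + 1), n, 1]

theorem extremeTwoCounts_two_mul (n : ℕ) :
    extremeTwoCounts (2 * n) =
      !![0, -1, 0, 0, 1, 0;
        -1, 0, 0, 0, 1, 0;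
        0, 0, 0, -1, 1, 1;
        -1, 0, 0, 0, 1, 0;
        0, 0, 0, 0, 2, 0;
        0, 0, 0, 0, 0, 1] *ᵥ extremeTwoCounts n := by
  have := maxCount_two_two_mul n
  have := minCount_two_two_mul n
  have := maxCount_two_two_mul_add_one n
  have := minCount_two_two_mul_add_one n
  ext i
  fin_cases i <;> simp [extremeTwoCounts, mulVec, dotProduct, Fin.sum_univ_succ] <;> omega

theorem extremeTwoCounts_two_mul_add_one (n : ℕ) :
    extremeTwoCounts (2 * n + 1) =
      !![0, 0, 0, -1, 1, 1;
        -1, 0, 0, 0, 1, 0;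
        0, 0, 0, -1, 1, 1;
        0, 0, -1, 0, 1, 1;
        0, 0, 0, 0, 2, 1;
        0, 0, 0, 0, 0, 1] *ᵥ extremeTwoCounts n := by
  have := maxCount_two_two_mul_add_one n
  have := minCount_two_two_mul_add_one n
  have h₁ := maxCount_two_two_mul (n + 1)
  have h₂ := minCount_two_two_mul (n + 1)
  rw [show 2 * (n + 1) = 2 * n + 1 + 1 by ring] at h₁ h₂
  ext i
  fin_cases i <;> simp [extremeTwoCounts, mulVec, dotProduct, Fin.sum_univ_succ] <;> omega

theorem isTwoRegular_of_decimations_extremeTwoCounts {s : ℕ → ℤ} (c₀ c₁ : Fin 6 → ℤ)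
    (hs₀ : ∀ n, s (2 * n) = c₀ ⬝ᵥ extremeTwoCounts n)
    (hs₁ : ∀ n, s (2 * n + 1) = c₁ ⬝ᵥ extremeTwoCounts n) : IsTwoRegular s :=
  isTwoRegular_of_linearRepresentation extremeTwoCounts _ _ extremeTwoCounts_two_mul
    extremeTwoCounts_two_mul_add_one c₀ c₁ hs₀ hs₁

theorem isTwoRegular_D0 : IsTwoRegular fun n => (D0 n : ℤ) := by
  refine isTwoRegular_of_decimations_extremeTwoCounts ![2, -2, 0, 0, 0, 0] ![1, -1, 1, -1, 0, 0]
    (fun n => ?_) (fun n => ?_)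
  · show ((maxCount xw 0 (2 * n) - minCount xw 0 (2 * n) : ℕ) : ℤ) = _
    rw [maxCount_zero_two_mul, minCount_zero_two_mul]
    have := minCount_le_maxCount xw 2 n
    simp [extremeTwoCounts, dotProduct, Fin.sum_univ_succ]
    omega
  · show ((maxCount xw 0 (2 * n + 1) - minCount xw 0 (2 * n + 1) : ℕ) : ℤ) = _
    rw [maxCount_zero_two_mul_add_one, minCount_zero_two_mul_add_one]
    have := minCount_le_maxCount xw 2 n
    have := minCount_le_maxCount xw 2 (n + 1)
    simp [extremeTwoCounts, dotProduct, Fin.sum_univ_succ]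
    omega

theorem isTwoRegular_m0 : IsTwoRegular fun n => (m0 n : ℤ) := by
  refine isTwoRegular_of_decimations_extremeTwoCounts ![0, 2, 0, 0, 0, 0] ![0, 1, 0, 1, 0, 0]
    (fun n => ?_) (fun n => ?_)
  · show ((minCount xw 0 (2 * n) : ℕ) : ℤ) = _
    simp [minCount_zero_two_mul, extremeTwoCounts, dotProduct, Fin.sum_univ_succ]
  · show ((minCount xw 0 (2 * n + 1) : ℕ) : ℤ) = _
    simp [minCount_zero_two_mul_add_one, extremeTwoCounts, dotProduct, Fin.sum_univ_succ]

theorem stmt6 :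
    IsTwoRegular (fun n => (D0 n : ℤ)) ∧
    IsTwoAutomatic (fun n => ((D0 n % 2 : ℕ) : ℤ)) ∧
    IsTwoAutomatic (fun n => ((m0 n % 2 : ℕ) : ℤ)) := by
  refine ⟨isTwoRegular_D0, ?_, ?_⟩
  · simpa only [Int.natCast_mod] using isTwoRegular_D0.isTwoAutomatic_emod 2
  · simpa only [Int.natCast_mod] using isTwoRegular_m0.isTwoAutomatic_emod 2
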